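/- Let C be a cyclic code of length n over R whose component codes are C_i = ⟨g_i(x)⟩ ⊆ 𝔽_q[x]/⟨x^n − 1⟩, where each g_i ∈ 𝔽_q[x] is monic and g_i(x)·h_i(x) = x^n − 1. Then, under the identification of R^n with R[x]/⟨x^n − 1⟩, the dual code C^⊥ is the ideal generated by Σ_{i=1}^e μ_i·h_i^*(x), where h_i^*(x) = x^{deg h_i}·h_i(1/x) is the reciprocal polynomial of h_i. -/

import Mathlib

open Polynomial

noncomputable section

/-- The ring `R = 𝔽_q[u]/⟨u^e − 1⟩`. -/
abbrev Rring (F : Type) [Field F] (e : ℕ) : Type := AdjoinRoot ((X : Polynomial F) ^ e - 1)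

/-- Dual of a linear code (submodule of `ι → S`) with respect to the standard
bilinear form `⟨x, y⟩ = ∑ j, x j * y j`. -/
def dualCode {S ι : Type} [CommRing S] [Fintype ι] (C : Submodule S (ι → S)) :
    Submodule S (ι → S) where
  carrier := {x | ∀ y ∈ C, ∑ j, x j * y j = 0}
  add_mem' := by
    intro a b ha hb y hy
    have : ∑ j, (a j + b j) * y j = (∑ j, a j * y j) + ∑ j, b j * y j := by
      rw [← Finset.sum_add_distrib]; simp [add_mul]
    simpa [this] using by rw [ha y hy, hb y hy, add_zero]
  zero_mem' := by intro y hy; simp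
  smul_mem' := by
    intro r x hx y hy
    have : ∑ j, (r • x) j * y j = r * ∑ j, x j * y j := by
      rw [Finset.mul_sum]; simp [mul_assoc]
    rw [this, hx y hy, mul_zero]

/-- Dual of an arbitrary set of words with respect to the standard bilinear form. -/
def dualSet {S ι : Type} [CommRing S] [Fintype ι] (s : Set (ι → S)) : Set (ι → S) :=
  {x | ∀ y ∈ s, ∑ j, x j * y j = 0}

/-- The Gray map `φ : R^n → 𝔽_q^{en}` determined by the algebra maps `σ_i : R → 𝔽_q`
and the matrix `M`: it sends `(r_0, …, r_{n−1})` to the concatenation of the row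
vectors `(σ_1(r_j), …, σ_e(r_j))·M`. -/
def grayMap {F : Type} [Field F] {e n : ℕ}
    (σ : Fin e → (Rring F e →ₐ[F] F)) (M : Matrix (Fin e) (Fin e) F)
    (r : Fin n → Rring F e) : Fin n × Fin e → F :=
  fun jk => ∑ i, σ i (r jk.1) * M i jk.2

/-- The `i`-th component code of a linear code `C ⊆ R^n`: the image of `C` under the
map applying `σ_i` to each coordinate. -/
def compCode {F : Type} [Field F] {e n : ℕ}
    (σi : Rring F e →ₐ[F] F) (C : Submodule (Rring F e) (Fin n → Rring F e)) :
    Submodule F (Fin n → F) :=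
  Submodule.map (σi.toLinearMap.compLeft (Fin n)) (C.restrictScalars F)

/-- The cyclic shift `(c_0, …, c_{n−1}) ↦ (c_{n−1}, c_0, …, c_{n−2})`. -/
def cyclicShift {S : Type} {n : ℕ} [NeZero n] (c : Fin n → S) : Fin n → S :=
  fun j => c (j - 1)

/-- The identification of `S^n` with `S[x]/⟨x^n − 1⟩`,
`(c_0, …, c_{n−1}) ↦ c_0 + c_1 x + ⋯ + c_{n−1} x^{n−1}`. -/
def toPoly {S : Type} [CommRing S] {n : ℕ} (c : Fin n → S) :
    Polynomial S ⧸ Ideal.span {(X : Polynomial S) ^ n - 1} :=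
  Ideal.Quotient.mk _ (∑ j : Fin n, Polynomial.C (c j) * X ^ (j : ℕ))

end


noncomputable section AuxCode

variable {S : Type} [CommRing S] {n : ℕ}

/-- Polynomial of a vector. -/
def pOf (c : Fin n → S) : S[X] := ∑ j : Fin n, C (c j) * X ^ (j : ℕ)

lemma coeff_pOf (c : Fin n → S) (m : ℕ) :
    (pOf c).coeff m = if h : m < n then c ⟨m, h⟩ else 0 := by
  rw [pOf, finset_sum_coeff]
  simp only [coeff_C_mul, coeff_X_pow, mul_ite, mul_one, mul_zero]
  split
  · next h =>
    rw [Finset.sum_eq_single (⟨m, h⟩ : Fin n)]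
    · simp
    · intro b _ hb
      rw [if_neg]
      exact fun hmb => hb (Fin.ext hmb.symm)
    · simp
  · next h =>
    apply Finset.sum_eq_zero
    intro b _
    rw [if_neg]
    intro hb
    exact h (hb ▸ b.isLt)

lemma natDegree_pOf_le (c : Fin n → S) : (pOf c).natDegree ≤ n - 1 := by
  rw [natDegree_le_iff_coeff_eq_zero]
  intro N hN
  rw [coeff_pOf, dif_neg]
  omega

lemma degree_pOf_lt (c : Fin n → S) : (pOf c).degree < (n : WithBot ℕ) := by
  rw [degree_lt_iff_coeff_zero]
  intro m hm
  rw [coeff_pOf, dif_neg]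
  exact fun h => absurd (Nat.cast_le.mp hm) (by omega)

/-- Vector of a polynomial. -/
def vOf (p : S[X]) : Fin n → S := fun j => p.coeff (j : ℕ)

lemma vOf_pOf (c : Fin n → S) : vOf (pOf c) = c := by
  funext j
  rw [vOf, coeff_pOf, dif_pos j.isLt]

lemma pOf_vOf (p : S[X]) (hp : p.degree < (n : WithBot ℕ)) : pOf (vOf (n := n) p) = p := by
  apply Polynomial.ext
  intro m
  rw [coeff_pOf]
  split
  · rfl
  · next h =>
    rw [eq_comm]
    apply coeff_eq_zero_of_degree_lt
    exact lt_of_lt_of_le hp (by exact_mod_cast Nat.le_of_not_lt h)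

lemma toPoly_eq (c : Fin n → S) :
    toPoly c = Ideal.Quotient.mk (Ideal.span {(X : S[X]) ^ n - 1}) (pOf c) := rfl

lemma monic_fpoly (hn : 0 < n) : ((X : S[X]) ^ n - 1).Monic := by
  have := monic_X_pow_sub_C (1 : S) hn.ne'
  rwa [map_one] at this

lemma degree_fpoly [Nontrivial S] (hn : 0 < n) :
    ((X : S[X]) ^ n - 1).degree = (n : WithBot ℕ) := by
  have := degree_X_pow_sub_C (R := S) hn 1
  rwa [map_one] at this

lemma natDegree_fpoly [Nontrivial S] : ((X : S[X]) ^ n - 1).natDegree = n := by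
  have : ((X : S[X]) ^ n - 1) = X ^ n - C 1 := by rw [map_one]
  rw [this, natDegree_X_pow_sub_C]

lemma reverse_fpoly [Nontrivial S] (hn : 0 < n) :
    ((X : S[X]) ^ n - 1).reverse = 1 - X ^ n := by
  have h1 : ((X : S[X]) ^ n - 1) = X ^ n + C (-1) * X ^ 0 := by
    rw [pow_zero, mul_one, map_neg, map_one]; ring
  rw [reverse, natDegree_fpoly, h1, reflect_add, reflect_monomial, reflect_C_mul_X_pow,
    revAt_le (le_refl n), revAt_le (Nat.zero_le n)]
  rw [map_neg, map_one]
  simp only [Nat.sub_self, Nat.sub_zero, pow_zero]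
  ring

lemma mk_eq_mk_iff_dvd (p q : S[X]) :
    Ideal.Quotient.mk (Ideal.span {(X : S[X]) ^ n - 1}) p =
      Ideal.Quotient.mk (Ideal.span {(X : S[X]) ^ n - 1}) q ↔
    ((X : S[X]) ^ n - 1) ∣ p - q := by
  rw [Ideal.Quotient.eq, Ideal.mem_span_singleton]

/-- The key pairing identity. -/
lemma pairing_eq (hn : 0 < n) (a d : Fin n → S) :
    ∑ j, a j * d j = (pOf a * reflect (n - 1) (pOf d)).coeff (n - 1) := by
  rw [coeff_mul, Finset.Nat.sum_antidiagonal_eq_sum_range_succ_mk,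
    show (n - 1).succ = n from by omega,
    ← Fin.sum_univ_eq_sum_range
      (fun k => (pOf a).coeff (k, n - 1 - k).1 * (reflect (n - 1) (pOf d)).coeff (k, n - 1 - k).2) n]
  apply Finset.sum_congr rfl
  intro j _
  have hk : (j : ℕ) < n := j.isLt
  simp only
  rw [coeff_pOf, dif_pos hk, coeff_reflect, revAt_le (Nat.sub_le _ _), coeff_pOf,
    Nat.sub_sub_self (by omega), dif_pos hk]

end AuxCode

noncomputable section FieldCase

open Polynomial

variable {S : Type} [CommRing S] {n : ℕ}

lemma natDegree_reflect_le {N : ℕ} (p : S[X]) (hp : p.natDegree ≤ N) :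
    (reflect N p).natDegree ≤ N := by
  rw [natDegree_le_iff_coeff_eq_zero]
  intro M hM
  rw [coeff_reflect, revAt_eq_self_of_lt hM]
  exact coeff_eq_zero_of_natDegree_lt (lt_of_le_of_lt hp hM)

variable {F : Type} [Field F]

lemma toPoly_inj (hn : 0 < n) {c d : Fin n → F} (hcd : toPoly c = toPoly d) : c = d := by
  rw [toPoly_eq, toPoly_eq, mk_eq_mk_iff_dvd] at hcd
  have h0 : pOf c - pOf d = 0 := by
    apply eq_zero_of_dvd_of_degree_lt hcd
    rw [degree_fpoly hn]
    exact lt_of_le_of_lt (degree_sub_le _ _) (max_lt (degree_pOf_lt c) (degree_pOf_lt d))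
  have : pOf c = pOf d := by linear_combination h0
  rw [← vOf_pOf c, this, vOf_pOf]

/-- The classical result: for a code over a field whose image is the ideal `⟨g⟩`,
duality is membership in `⟨h.reverse⟩`. -/
lemma dual_iff_span (hn : 0 < n) (D : Submodule F (Fin n → F))
    (g h : F[X]) (hg : g.Monic) (hgh : g * h = X ^ n - 1)
    (hD : toPoly '' (D : Set (Fin n → F)) =
      (Ideal.span {Ideal.Quotient.mk (Ideal.span {(X : F[X]) ^ n - 1}) g} : Set _))
    (a : Fin n → F) :
    (∀ d ∈ D, ∑ j, a j * d j = 0) ↔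
      Ideal.Quotient.mk (Ideal.span {(X : F[X]) ^ n - 1}) (pOf a) ∈
        Ideal.span {Ideal.Quotient.mk (Ideal.span {(X : F[X]) ^ n - 1}) h.reverse} := by
  have hf0 : ((X : F[X]) ^ n - 1) ≠ 0 := by
    have := X_pow_sub_C_ne_zero (R := F) hn 1
    rwa [map_one] at this
  have hg0 : g ≠ 0 := hg.ne_zero
  have hh0 : h ≠ 0 := fun h0 => hf0 (by rw [← hgh, h0, mul_zero])
  have hdeg : g.natDegree + h.natDegree = n := by
    rw [← natDegree_mul hg0 hh0, hgh, natDegree_fpoly]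
  have hrev : g.reverse * h.reverse = 1 - X ^ n := by
    rw [← reverse_mul, hgh, reverse_fpoly hn]
    rw [hg.leadingCoeff, one_mul]
    exact leadingCoeff_ne_zero.mpr hh0
  have h1X : (1 - (X : F[X]) ^ n) ≠ 0 := fun h => hf0 (by linear_combination -h)
  have hmemD : ∀ d : Fin n → F, d ∈ D ↔
      Ideal.Quotient.mk (Ideal.span {(X : F[X]) ^ n - 1}) (pOf d) ∈
        Ideal.span {Ideal.Quotient.mk (Ideal.span {(X : F[X]) ^ n - 1}) g} := by
    intro d
    constructor
    · intro hd
      have : toPoly d ∈ toPoly '' (D : Set (Fin n → F)) := ⟨d, hd, rfl⟩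
      rw [hD] at this
      exact this
    · intro hd
      have : toPoly d ∈ toPoly '' (D : Set (Fin n → F)) := by rw [hD]; exact hd
      obtain ⟨d', hd', hdd⟩ := this
      rwa [toPoly_inj hn hdd] at hd'
  constructor
  · -- forward: dual element is a multiple of h.reverse
    intro hdual
    have hconstr : ∀ j, g.natDegree ≤ j → j < n → (pOf a * g.reverse).coeff j = 0 := by
      intro j hj1 hj2
      have ht : j - g.natDegree < h.natDegree := by omega
      set t := j - g.natDegree with htdef
      have hdegt : (g * X ^ t).degree < (n : WithBot ℕ) := by
        rw [degree_mul, degree_X_pow, degree_eq_natDegree hg0, ← Nat.cast_add]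
        exact_mod_cast (by omega : g.natDegree + t < n)
      have hdt : vOf (g * X ^ t) ∈ D := by
        apply (hmemD _).mpr
        rw [pOf_vOf _ hdegt]
        exact Ideal.mem_span_singleton'.mpr
          ⟨Ideal.Quotient.mk _ (X ^ t), by rw [← map_mul, mul_comm]⟩
      have h0 := hdual _ hdt
      rw [pairing_eq hn, pOf_vOf _ hdegt] at h0
      have hr1 : reflect (n - 1) (g * X ^ t) = g.reverse * X ^ (h.natDegree - 1 - t) := by
        have e1 : n - 1 = (g.natDegree + t) + (h.natDegree - 1 - t) := by omega
        rw [e1, ← mul_one (g * X ^ t),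
          reflect_mul (g * X ^ t) 1
            (le_trans natDegree_mul_le (by rw [natDegree_X_pow])) (by rw [natDegree_one]; omega),
          reflect_mul g (X ^ t) (le_refl _) (by rw [natDegree_X_pow]),
          reflect_monomial, revAt_le (le_refl t), Nat.sub_self, pow_zero, mul_one,
          ← pow_zero (X : F[X]), reflect_monomial, revAt_le (Nat.zero_le _), Nat.sub_zero]
        rfl
      rw [hr1, ← mul_assoc, coeff_mul_X_pow', if_pos (by omega)] at h0
      have e2 : n - 1 - (h.natDegree - 1 - t) = j := by omega
      rwa [e2] at h0
    set W : F[X] := pOf a * g.reverse with hWdef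
    set L : F[X] := W %ₘ X ^ n with hLdef
    set U : F[X] := W /ₘ X ^ n with hUdef
    have hLW : L + X ^ n * U = W := modByMonic_add_div W (X ^ n)
    have hWdegle : W.natDegree ≤ n - 1 + g.natDegree :=
      le_trans natDegree_mul_le (add_le_add (natDegree_pOf_le a) (reverse_natDegree_le g))
    have hLdeg : L.degree < (n : WithBot ℕ) := by
      rw [← degree_X_pow (R := F) n]
      exact degree_modByMonic_lt W (monic_X_pow n)
    have hLcoeff : ∀ j, g.natDegree ≤ j → L.coeff j = 0 := by
      intro j hj
      by_cases hjn : j < n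
      · have : L.coeff j = W.coeff j - (X ^ n * U).coeff j := by
          rw [← hLW]; simp
        rw [this, hconstr j hj hjn, X_pow_dvd_iff.mp (dvd_mul_right _ _) j hjn, sub_zero]
      · exact coeff_eq_zero_of_degree_lt
          (lt_of_lt_of_le hLdeg (by exact_mod_cast Nat.le_of_not_lt hjn))
    have hUdeg : U ≠ 0 → U.natDegree ≤ g.natDegree - 1 ∧ 1 ≤ g.natDegree := by
      intro hU
      have h1 : (X ^ n * U).natDegree = n + U.natDegree := by
        rw [natDegree_mul (pow_ne_zero n X_ne_zero) hU, natDegree_X_pow]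
      have h2 : X ^ n * U = W - L := by linear_combination hLW
      have h3 : (W - L).natDegree ≤ n - 1 + g.natDegree := by
        apply le_trans (natDegree_sub_le _ _)
        apply max_le hWdegle
        have : L.natDegree ≤ n - 1 := by
          rcases eq_or_ne L 0 with hL0 | hL0
          · simp [hL0]
          · have := (natDegree_lt_iff_degree_lt hL0).mpr hLdeg
            omega
        omega
      rw [h2] at h1
      constructor <;> omega
    have hE : (pOf a + U * h.reverse) * (1 - X ^ n) = (L + U) * h.reverse := by
      linear_combination (-(pOf a)) * hrev - h.reverse * hLW
    have hA0 : pOf a + U * h.reverse = 0 := by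
      by_contra hne
      have hRHSne : (L + U) * h.reverse ≠ 0 := by
        rw [← hE]
        exact mul_ne_zero hne h1X
      have hLUne : L + U ≠ 0 := fun h' => hRHSne (by rw [h', zero_mul])
      have hLUcoeff : ∀ j, g.natDegree ≤ j → (L + U).coeff j = 0 := by
        intro j hj
        rw [coeff_add, hLcoeff j hj, zero_add]
        rcases eq_or_ne U 0 with hU0 | hU0
        · simp [hU0]
        · exact coeff_eq_zero_of_natDegree_lt (by have := hUdeg hU0; omega)
      have hLUdeg : (L + U).natDegree < g.natDegree := by
        by_contra hcon
        exact (leadingCoeff_ne_zero.mpr hLUne)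
          (hLUcoeff _ (Nat.le_of_not_lt hcon))
      have hgd1 : 1 ≤ g.natDegree := by omega
      have hn1X : (1 - (X : F[X]) ^ n).natDegree = n := by
        rw [show (1 - (X : F[X]) ^ n) = -(X ^ n - 1) by ring, natDegree_neg, natDegree_fpoly]
      have hdegL : ((pOf a + U * h.reverse) * (1 - X ^ n)).natDegree =
          (pOf a + U * h.reverse).natDegree + n := by
        rw [natDegree_mul hne h1X, hn1X]
      have hdegR : ((L + U) * h.reverse).natDegree ≤ n - 1 := by
        apply le_trans natDegree_mul_le
        have := reverse_natDegree_le h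
        omega
      rw [hE] at hdegL
      omega
    apply Ideal.mem_span_singleton'.mpr
    refine ⟨Ideal.Quotient.mk _ (-U), ?_⟩
    rw [← map_mul]
    congr 1
    linear_combination -hA0
  · -- backward: multiples of h.reverse are in the dual
    intro hA d hd
    obtain ⟨z, hz⟩ := Ideal.mem_span_singleton'.mp hA
    obtain ⟨s₁, rfl⟩ := Ideal.Quotient.mk_surjective z
    rw [← map_mul] at hz
    obtain ⟨t₁, ht₁⟩ := (mk_eq_mk_iff_dvd _ _).mp hz
    have hpa : pOf a = s₁ * h.reverse - (X ^ n - 1) * t₁ := by linear_combination -ht₁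
    obtain ⟨w, hw⟩ := Ideal.mem_span_singleton'.mp ((hmemD d).mp hd)
    obtain ⟨s, rfl⟩ := Ideal.Quotient.mk_surjective w
    rw [← map_mul] at hw
    obtain ⟨t, ht⟩ := (mk_eq_mk_iff_dvd _ _).mp hw
    have hd2 : pOf d = g * (s - h * t) := by linear_combination -ht + t * hgh
    set s₂ : F[X] := s - h * t with hs₂def
    by_cases hd0 : pOf d = 0
    · have hdz : d = fun _ => (0 : F) := by
        funext j
        have := congrArg (fun p : F[X] => p.coeff (j : ℕ)) hd0
        simpa [coeff_pOf] using this
      simp [hdz]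
    · have hs₂ : s₂ ≠ 0 := fun h' => hd0 (by rw [hd2, h', mul_zero])
      have hs2d : g.natDegree + s₂.natDegree ≤ n - 1 := by
        rw [← natDegree_mul hg0 hs₂, ← hd2]
        exact natDegree_pOf_le d
      have hh1 : 1 ≤ h.natDegree := by omega
      have hs₂le : s₂.natDegree ≤ h.natDegree - 1 := by omega
      set r : F[X] := reflect (h.natDegree - 1) s₂ with hrdef
      have hrefl : reflect (n - 1) (g * s₂) = g.reverse * r := by
        have e1 : n - 1 = g.natDegree + (h.natDegree - 1) := by omega
        rw [e1, reflect_mul g s₂ (le_refl _) hs₂le]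
        rfl
      set V : F[X] := -(s₁ + t₁ * g.reverse) with hVdef
      have hV : pOf a * g.reverse = (X ^ n - 1) * V := by
        linear_combination g.reverse * hpa + s₁ * hrev
      have hkey : pOf a * (g.reverse * r) = (X ^ n - 1) * (V * r) := by
        linear_combination r * hV
      rw [pairing_eq hn, hd2, hrefl, hkey]
      have hsplit : ((X ^ n - 1) * (V * r)).coeff (n - 1) =
          (X ^ n * (V * r)).coeff (n - 1) - (V * r).coeff (n - 1) := by
        rw [show (X ^ n - 1 : F[X]) * (V * r) = X ^ n * (V * r) - V * r by ring, coeff_sub]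
      rw [hsplit, X_pow_dvd_iff.mp (dvd_mul_right _ _) (n - 1) (by omega)]
      rcases eq_or_ne (V * r) 0 with hVr | hVr
      · rw [hVr]; simp
      · have hVne : V ≠ 0 := fun h' => hVr (by rw [h', zero_mul])
        have hrne : r ≠ 0 := fun h' => hVr (by rw [h', mul_zero])
        have hVdeg : V.natDegree ≤ g.natDegree - 1 ∧ 1 ≤ g.natDegree := by
          have h1 : ((X ^ n - 1 : F[X]) * V).natDegree = n + V.natDegree := by
            rw [natDegree_mul hf0 hVne, natDegree_fpoly]
          have h2 : ((X ^ n - 1 : F[X]) * V).natDegree ≤ n - 1 + g.natDegree := by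
            rw [← hV]
            exact le_trans natDegree_mul_le
              (add_le_add (natDegree_pOf_le a) (reverse_natDegree_le g))
          constructor <;> omega
        have hrdeg : r.natDegree ≤ h.natDegree - 1 := natDegree_reflect_le s₂ hs₂le
        have : (V * r).natDegree < n - 1 := by
          have := natDegree_mul_le (p := V) (q := r)
          omega
        rw [coeff_eq_zero_of_natDegree_lt this]
        ring

end FieldCase


noncomputable section Assembly

open Polynomial

variable {F : Type} [Field F] {e : ℕ}

lemma map_pOf {S T : Type} [CommRing S] [CommRing T] {n : ℕ} (φ : S →+* T) (a : Fin n → S) :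
    (pOf a).map φ = pOf (fun j => φ (a j)) := by
  apply Polynomial.ext
  intro m
  simp only [coeff_map, coeff_pOf]
  split <;> simp

lemma sigma_inj (he : 0 < e)
    (σ : Fin e → (Rring F e →ₐ[F] F)) (μ : Fin e → Rring F e)
    (hμ : ∀ i j, σ j (μ i) = if i = j then 1 else 0)
    (r : Rring F e) (hr : ∀ i, σ i r = 0) : r = 0 := by
  have hmon : ((X : F[X]) ^ e - 1).Monic := monic_fpoly he
  let pb := AdjoinRoot.powerBasis' hmon
  haveI : Module.Finite F (Rring F e) := Module.Finite.of_basis pb.basis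
  have hfr : Module.finrank F (Rring F e) = e := by
    rw [pb.finrank]
    show ((X : F[X]) ^ e - 1).natDegree = e
    exact natDegree_fpoly
  set Φ : Rring F e →ₗ[F] (Fin e → F) := LinearMap.pi (fun i => (σ i).toLinearMap) with hΦ
  have hsurj : Function.Surjective Φ := by
    intro v
    refine ⟨∑ i, v i • μ i, ?_⟩
    funext j
    show σ j (∑ i, v i • μ i) = v j
    rw [map_sum]
    simp only [map_smul, hμ, smul_eq_mul, mul_ite, mul_one, mul_zero]
    rw [Finset.sum_ite_eq']
    simp
  have hinj : Function.Injective Φ := by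
    rw [LinearMap.injective_iff_surjective_of_finrank_eq_finrank
      (by rw [hfr, Module.finrank_fintype_fun_eq_card, Fintype.card_fin])]
    exact hsurj
  apply hinj
  rw [map_zero]
  funext i
  exact hr i

lemma mapσ_comb (σ : Fin e → (Rring F e →ₐ[F] F)) (μ : Fin e → Rring F e)
    (hμ : ∀ i j, σ j (μ i) = if i = j then 1 else 0) (j : Fin e) (p : Fin e → F[X]) :
    (∑ i, C (μ i) * ((p i).map (algebraMap F (Rring F e)))).map (σ j).toRingHom = p j := by
  have hterm : ∀ i, ((C (μ i) * ((p i).map (algebraMap F (Rring F e)))).map (σ j).toRingHom)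
      = if i = j then p i else 0 := by
    intro i
    rw [Polynomial.map_mul, map_C, Polynomial.map_map]
    have hcomp : (σ j).toRingHom.comp (algebraMap F (Rring F e)) = RingHom.id F := by
      ext x
      simpa using (σ j).commutes x
    rw [hcomp, Polynomial.map_id, show (σ j).toRingHom (μ i) = σ j (μ i) from rfl, hμ]
    split <;> simp
  rw [Polynomial.map_sum]
  simp only [hterm]
  rw [Finset.sum_ite_eq']
  simp

lemma map_all_zero (σ : Fin e → (Rring F e →ₐ[F] F))
    (hzero : ∀ r : Rring F e, (∀ i, σ i r = 0) → r = 0)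
    (P : (Rring F e)[X]) (hP : ∀ i, P.map (σ i).toRingHom = 0) : P = 0 := by
  apply Polynomial.ext
  intro m
  rw [coeff_zero]
  apply hzero
  intro i
  have := congrArg (fun q : F[X] => q.coeff m) (hP i)
  simpa [coeff_map] using this

lemma mem_dualCode {S ι : Type} [CommRing S] [Fintype ι] (C : Submodule S (ι → S))
    (x : ι → S) : x ∈ dualCode C ↔ ∀ y ∈ C, ∑ j, x j * y j = 0 := Iff.rfl

end Assembly

/-- Let `C` be a cyclic code of length `n` over `R = 𝔽_q[u]/⟨u^e − 1⟩`
whose component codes are `C_i = ⟨g_i(x)⟩` with `g_i` monic and `g_i·h_i = x^n − 1`.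
Then, under the identification of `R^n` with `R[x]/⟨x^n − 1⟩`, the dual code `C^⊥` is
the ideal generated by `∑ μ_i h_i^*(x)`, where `h_i^*` is the reciprocal polynomial
of `h_i` (in Mathlib, `Polynomial.reverse`). -/
theorem dualCode_generator_polynomial
    {F : Type} [Field F] [Fintype F] (e n : ℕ) [NeZero n] (he : 2 ≤ e)
    (hdvd : e ∣ Fintype.card F - 1)
    (α : Fin e → F) (hα : Function.Injective α) (hroot : ∀ i, α i ^ e = 1)
    (σ : Fin e → (Rring F e →ₐ[F] F))
    (hσ : ∀ i, σ i (AdjoinRoot.root ((X : Polynomial F) ^ e - 1)) = α i)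
    (μ : Fin e → Rring F e)
    (hμ : ∀ i j, σ j (μ i) = if i = j then 1 else 0)
    (C : Submodule (Rring F e) (Fin n → Rring F e))
    (hcyc : ∀ c ∈ C, cyclicShift c ∈ C)
    (g h : Fin e → Polynomial F)
    (hmonic : ∀ i, (g i).Monic)
    (hgh : ∀ i, g i * h i = (X : Polynomial F) ^ n - 1)
    (hcomp : ∀ i, toPoly '' (compCode (σ i) C : Set (Fin n → F)) =
      (Ideal.span {Ideal.Quotient.mk (Ideal.span {(X : Polynomial F) ^ n - 1}) (g i)} :
        Set (Polynomial F ⧸ Ideal.span {(X : Polynomial F) ^ n - 1}))) :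
    toPoly '' (dualCode C : Set (Fin n → Rring F e)) =
      (Ideal.span {Ideal.Quotient.mk
          (Ideal.span {(X : Polynomial (Rring F e)) ^ n - 1})
          (∑ i, Polynomial.C (μ i) *
            ((h i).reverse.map (algebraMap F (Rring F e))))} :
        Set (Polynomial (Rring F e) ⧸
          Ideal.span {(X : Polynomial (Rring F e)) ^ n - 1})) := by
  classical
  have hn : 0 < n := Nat.pos_of_ne_zero (NeZero.ne n)
  have he0 : 0 < e := by omega
  haveI : Nontrivial (Rring F e) := (σ ⟨0, he0⟩).toRingHom.domain_nontrivial
  have hzero : ∀ r : Rring F e, (∀ i, σ i r = 0) → r = 0 := sigma_inj he0 σ μ hμ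
  set q0 : (Rring F e)[X] :=
    ∑ i, Polynomial.C (μ i) * ((h i).reverse.map (algebraMap F (Rring F e))) with hq0
  ext z
  simp only [Set.mem_image, SetLike.mem_coe]
  constructor
  · rintro ⟨a, ha, rfl⟩
    have hdi : ∀ i, Ideal.Quotient.mk (Ideal.span {(X : F[X]) ^ n - 1})
        (pOf (fun j => σ i (a j))) ∈
        Ideal.span {Ideal.Quotient.mk (Ideal.span {(X : F[X]) ^ n - 1}) ((h i).reverse)} := by
      intro i
      apply (dual_iff_span hn (compCode (σ i) C) (g i) (h i) (hmonic i) (hgh i) (hcomp i)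
        (fun j => σ i (a j))).mp
      intro d hd
      obtain ⟨y, hy, rfl⟩ := hd
      have hya : ∀ j, ((σ i).toLinearMap.compLeft (Fin n) y) j = σ i (y j) := fun _ => rfl
      simp only [hya]
      have : ∑ j, σ i (a j) * σ i (y j) = σ i (∑ j, a j * y j) := by
        rw [map_sum]
        simp [map_mul]
      rw [this, ha y hy, map_zero]
    have hexists : ∀ i, ∃ s t : F[X],
        pOf (fun j => σ i (a j)) = s * (h i).reverse + ((X : F[X]) ^ n - 1) * t := by
      intro i
      obtain ⟨w, hw⟩ := Ideal.mem_span_singleton'.mp (hdi i)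
      obtain ⟨s, rfl⟩ := Ideal.Quotient.mk_surjective w
      rw [← map_mul] at hw
      obtain ⟨t, ht⟩ := (mk_eq_mk_iff_dvd _ _).mp hw
      exact ⟨s, -t, by linear_combination -ht⟩
    choose s t hst using hexists
    set Sp : (Rring F e)[X] :=
      ∑ i, Polynomial.C (μ i) * ((s i).map (algebraMap F (Rring F e))) with hSp
    set Tp : (Rring F e)[X] :=
      ∑ i, Polynomial.C (μ i) * ((t i).map (algebraMap F (Rring F e))) with hTp
    have hkey : pOf a - (Sp * q0 + ((X : (Rring F e)[X]) ^ n - 1) * Tp) = 0 := by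
      apply map_all_zero σ hzero
      intro i
      rw [Polynomial.map_sub, Polynomial.map_add, Polynomial.map_mul, Polynomial.map_mul,
        map_pOf, hSp, hTp, hq0, mapσ_comb σ μ hμ, mapσ_comb σ μ hμ, mapσ_comb σ μ hμ,
        Polynomial.map_sub, Polynomial.map_pow, Polynomial.map_one, Polynomial.map_X]
      have hst' : (pOf fun j => (σ i).toRingHom (a j))
          = s i * (h i).reverse + ((X : F[X]) ^ n - 1) * t i := hst i
      linear_combination hst'
    refine Ideal.mem_span_singleton'.mpr ⟨Ideal.Quotient.mk _ Sp, ?_⟩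
    rw [toPoly_eq, ← map_mul, mk_eq_mk_iff_dvd]
    exact ⟨-Tp, by linear_combination -hkey⟩
  · intro hz
    obtain ⟨w, hw⟩ := Ideal.mem_span_singleton'.mp hz
    obtain ⟨Sp', rfl⟩ := Ideal.Quotient.mk_surjective w
    set P : (Rring F e)[X] := Sp' * q0 with hP
    have hmonR : ((X : (Rring F e)[X]) ^ n - 1).Monic := monic_fpoly hn
    set a : Fin n → Rring F e := vOf (P %ₘ ((X : (Rring F e)[X]) ^ n - 1)) with hadef
    have hmod : P %ₘ ((X : (Rring F e)[X]) ^ n - 1)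
        = P - ((X : (Rring F e)[X]) ^ n - 1) * (P /ₘ ((X : (Rring F e)[X]) ^ n - 1)) := by
      linear_combination modByMonic_add_div P ((X : (Rring F e)[X]) ^ n - 1)
    have hdegmod : (P %ₘ ((X : (Rring F e)[X]) ^ n - 1)).degree < (n : WithBot ℕ) := by
      rw [← degree_fpoly (S := Rring F e) hn]
      exact degree_modByMonic_lt P hmonR
    have htoP : toPoly a = Ideal.Quotient.mk (Ideal.span {(X : (Rring F e)[X]) ^ n - 1}) P := by
      rw [toPoly_eq, hadef, pOf_vOf _ hdegmod, mk_eq_mk_iff_dvd]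
      exact ⟨-(P /ₘ ((X : (Rring F e)[X]) ^ n - 1)), by linear_combination hmod⟩
    refine ⟨a, ?_, by rw [htoP, hP, map_mul]; exact hw⟩
    rw [mem_dualCode]
    intro y hy
    apply hzero
    intro i
    rw [map_sum]
    simp only [map_mul]
    have hmem : (fun j => σ i (y j)) ∈ compCode (σ i) C := ⟨y, hy, rfl⟩
    apply (dual_iff_span hn (compCode (σ i) C) (g i) (h i) (hmonic i) (hgh i) (hcomp i)
      (fun j => σ i (a j))).mpr ?_ _ hmem
    have hpa : pOf (fun j => σ i (a j))
        = (P %ₘ ((X : (Rring F e)[X]) ^ n - 1)).map (σ i).toRingHom := by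
      have h2 : pOf a = P %ₘ ((X : (Rring F e)[X]) ^ n - 1) := by
        rw [hadef]; exact pOf_vOf _ hdegmod
      rw [← h2, map_pOf]
      rfl
    refine Ideal.mem_span_singleton'.mpr
      ⟨Ideal.Quotient.mk _ (Sp'.map (σ i).toRingHom), ?_⟩
    rw [← map_mul, mk_eq_mk_iff_dvd, hpa]
    refine ⟨(P /ₘ ((X : (Rring F e)[X]) ^ n - 1)).map (σ i).toRingHom, ?_⟩
    have h1 : (P %ₘ ((X : (Rring F e)[X]) ^ n - 1)).map (σ i).toRingHom
        = (Sp'.map (σ i).toRingHom) * (h i).reverse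
          - ((X : F[X]) ^ n - 1) * ((P /ₘ ((X : (Rring F e)[X]) ^ n - 1)).map (σ i).toRingHom) := by
      rw [hmod, Polynomial.map_sub, Polynomial.map_mul, hP, Polynomial.map_mul, hq0,
        mapσ_comb σ μ hμ, Polynomial.map_sub, Polynomial.map_pow, Polynomial.map_one,
        Polynomial.map_X]
    linear_combination -h1
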